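/- arXiv:2402.08543 — 3 statements merged into one kernel-verified Lean document; each statement's English description precedes it below -/
import Mathlib

section
/- Under Assumptions A1–A4 (with ℓ(y,·) convex and twice continuously differentiable and r0 replaced, in the smoothed problems, by a convex smooth approximation), the full-data and leave-one-out estimators satisfy, for every i, ‖β̂ − β̂_{/i}‖₂ ≤ |ℓ̇_i(β̂_{/i})| · ‖x_i‖₂ / (min{2λη, 1}), where ℓ̇_i(β) = ∂ℓ(y_i, z)/∂z evaluated at z = x_iᵀβ. -/
open scoped RealInnerProductSpace NNReal

/-!
Both objectives are `2λη`-strongly convex on `Θ` (the ridge part of the penalty), so each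
minimizer beats the other point of `Θ` by at least `λη ‖β̂ - β̂_{/i}‖²`. Adding the two
inequalities, everything cancels except the `i`-th loss term, whence
`2λη ‖β̂ - β̂_{/i}‖² ≤ ℓ_i(β̂_{/i}) - ℓ_i(β̂)`, and the tangent line of the convex `ℓ(y_i, ·)` at
`x_iᵀβ̂_{/i}` with Cauchy–Schwarz bounds the right side by `|ℓ̇_i(β̂_{/i})| ‖x_i‖ ‖β̂ - β̂_{/i}‖`.
-/

open Set Filter Topology

theorem ConvexOn.sum {ι E : Type*} [AddCommMonoid E] [SMul ℝ E] {s : Set E} (hs : Convex ℝ s)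
    {f : ι → E → ℝ} (t : Finset ι) (hf : ∀ i ∈ t, ConvexOn ℝ s (f i)) :
    ConvexOn ℝ s fun x => ∑ i ∈ t, f i x := by
  classical
  induction t using Finset.induction with
  | empty => simpa using convexOn_const (0 : ℝ) hs
  | insert j t hj ih =>
    simp only [Finset.sum_insert hj]
    exact (hf j (t.mem_insert_self j)).add (ih fun i hi => hf i (Finset.mem_insert_of_mem hi))

theorem ConvexOn.add_deriv_mul_sub_le {S : Set ℝ} {f : ℝ → ℝ} {a b : ℝ} (hf : ConvexOn ℝ S f)
    (ha : a ∈ S) (hb : b ∈ S) (hfa : DifferentiableAt ℝ f a) :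
    f a + deriv f a * (b - a) ≤ f b := by
  rcases lt_trichotomy a b with hab | rfl | hab
  · have := hf.deriv_le_slope ha hb hab hfa
    rw [slope_def_field, le_div_iff₀ (sub_pos.2 hab)] at this
    linarith
  · simp
  · have := hf.slope_le_deriv hb ha hab hfa
    rw [slope_def_field, div_le_iff₀ (sub_pos.2 hab)] at this
    linarith

theorem ConvexOn.sub_le_abs_deriv_mul_abs_sub {f : ℝ → ℝ} (hf : ConvexOn ℝ univ f) {a : ℝ}
    (hfa : DifferentiableAt ℝ f a) (b : ℝ) : f a - f b ≤ |deriv f a| * |a - b| := by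
  have tangent := hf.add_deriv_mul_sub_le (mem_univ a) (mem_univ b) hfa
  calc f a - f b ≤ deriv f a * (a - b) := by linarith
    _ ≤ |deriv f a * (a - b)| := le_abs_self _
    _ = |deriv f a| * |a - b| := abs_mul _ _

section StrongConvexity

variable {E : Type*} [NormedAddCommGroup E]

theorem UniformConvexOn.add_le_of_isMinOn [NormedSpace ℝ E] {s : Set E} {φ : ℝ → ℝ}
    {f : E → ℝ} {x z : E} (hf : UniformConvexOn s φ f) (hx : x ∈ s) (hmin : IsMinOn f s x)
    (hz : z ∈ s) : f x + φ ‖z - x‖ ≤ f z := by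
  have along_segment : ∀ t ∈ Ioo (0 : ℝ) 1, f x + (1 - t) * φ ‖z - x‖ ≤ f z := by
    rintro t ⟨ht0, ht1⟩
    have ht1' : 0 ≤ 1 - t := sub_nonneg.2 ht1.le
    have hle : f x ≤ f (t • z + (1 - t) • x) := hmin (hf.1 hz hx ht0.le ht1' (add_sub_cancel t 1))
    have hconv := hf.2 hz hx ht0.le ht1' (add_sub_cancel t 1)
    simp only [smul_eq_mul] at hconv
    have : t * (f x + (1 - t) * φ ‖z - x‖) ≤ t * f z := by nlinarith
    exact le_of_mul_le_mul_left this ht0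
  have hlim : Tendsto (fun t : ℝ => f x + (1 - t) * φ ‖z - x‖) (𝓝[>] 0)
      (𝓝 (f x + φ ‖z - x‖)) := by
    have hcont : Continuous fun t : ℝ => f x + (1 - t) * φ ‖z - x‖ := by fun_prop
    simpa using (hcont.tendsto 0).mono_left nhdsWithin_le_nhds
  exact le_of_tendsto hlim (eventually_of_mem (Ioo_mem_nhdsGT one_pos) along_segment)

theorem StrongConvexOn.add_le_of_isMinOn [NormedSpace ℝ E] {s : Set E} {m : ℝ} {f : E → ℝ}
    {x z : E} (hf : StrongConvexOn s m f) (hx : x ∈ s) (hmin : IsMinOn f s x) (hz : z ∈ s) :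
    f x + m / 2 * ‖z - x‖ ^ 2 ≤ f z :=
  UniformConvexOn.add_le_of_isMinOn hf hx hmin hz

theorem StrongConvexOn.mul_norm_sub_sq_le_of_isMinOn_add [NormedSpace ℝ E] {s : Set E} {m : ℝ}
    {g h : E → ℝ} {x z : E} (hg : StrongConvexOn s m g) (hgh : StrongConvexOn s m (g + h))
    (hx : x ∈ s) (hxmin : IsMinOn (g + h) s x) (hz : z ∈ s) (hzmin : IsMinOn g s z) :
    m * ‖x - z‖ ^ 2 ≤ h z - h x := by
  have hx_beats_z := hgh.add_le_of_isMinOn hx hxmin hz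
  have hz_beats_x := hg.add_le_of_isMinOn hz hzmin hx
  rw [norm_sub_rev] at hx_beats_z
  simp only [Pi.add_apply] at hx_beats_z
  linarith

theorem ConvexOn.strongConvexOn_add_mul_norm_sq [InnerProductSpace ℝ E] {s : Set E}
    {C : E → ℝ} (hC : ConvexOn ℝ s C) (μ : ℝ) :
    StrongConvexOn s (2 * μ) fun x => C x + μ * ‖x‖ ^ 2 := by
  rw [strongConvexOn_iff_convex]
  convert hC using 2 with x
  ring

end StrongConvexity

theorem strongConvexOn_penalized_loss {ι E : Type*} [NormedAddCommGroup E]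
    [InnerProductSpace ℝ E] {s : Set E} (hs : Convex ℝ s) {ℓ : ℝ → ℝ → ℝ}
    (hℓ : ∀ y, ConvexOn ℝ univ (ℓ y)) {r0 : E → ℝ} (hr0 : ConvexOn ℝ univ r0) {lam η : ℝ}
    (hlam : 0 ≤ lam) (hη : η ≤ 1) (y : ι → ℝ) (x : ι → E) (t : Finset ι) :
    StrongConvexOn s (2 * lam * η)
      fun β => ∑ j ∈ t, ℓ (y j) ⟪x j, β⟫ + lam * ((1 - η) * r0 β + η * ‖β‖ ^ 2) := by
  have hloss : ConvexOn ℝ univ fun β => ∑ j ∈ t, ℓ (y j) ⟪x j, β⟫ :=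
    ConvexOn.sum convex_univ t fun j _ => (hℓ (y j)).comp_linearMap (innerₛₗ ℝ (x j))
  have hpen : ConvexOn ℝ univ fun β => lam * (1 - η) * r0 β :=
    hr0.smul (mul_nonneg hlam (sub_nonneg.2 hη))
  rw [show 2 * lam * η = 2 * (lam * η) by ring]
  convert ((hloss.add hpen).subset (subset_univ s) hs).strongConvexOn_add_mul_norm_sq
    (lam * η) using 2 with β
  simp only [Pi.add_apply]
  ring

theorem le_div_of_mul_sq_le_mul {c d R : ℝ} (hc : 0 < c) (hd : 0 ≤ d) (hR : 0 ≤ R)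
    (h : c * d ^ 2 ≤ R * d) :
    d ≤ R / c := by
  rw [le_div_iff₀ hc]
  rcases hd.eq_or_lt with rfl | hd
  · simpa using hR
  · nlinarith

theorem leave_one_out_perturbation_bound_general {p n : ℕ}
    (Θ : Set (EuclideanSpace ℝ (Fin p)))
    (hconv : Convex ℝ Θ)
    (ℓ : ℝ → ℝ → ℝ)
    (hℓconv : ∀ y, ConvexOn ℝ Set.univ (ℓ y))
    (hℓsmooth : ∀ y, ContDiff ℝ 2 (ℓ y))
    (r0 : EuclideanSpace ℝ (Fin p) → ℝ)
    (hr0conv : ConvexOn ℝ Set.univ r0)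
    (lam η : ℝ) (hlam : 0 < lam) (hη : η ∈ Set.Ioo (0 : ℝ) 1)
    (y : Fin n → ℝ) (x : Fin n → EuclideanSpace ℝ (Fin p))
    (bhat : EuclideanSpace ℝ (Fin p)) (hbmem : bhat ∈ Θ)
    (hbmin : IsMinOn
      (fun β => ∑ j, ℓ (y j) ⟪x j, β⟫ + lam * ((1 - η) * r0 β + η * ‖β‖ ^ 2))
      Θ bhat)
    (i : Fin n) (blo : EuclideanSpace ℝ (Fin p)) (hlomem : blo ∈ Θ)
    (hlomin : IsMinOn
      (fun β => ∑ j ∈ Finset.univ.erase i, ℓ (y j) ⟪x j, β⟫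
        + lam * ((1 - η) * r0 β + η * ‖β‖ ^ 2))
      Θ blo) :
    ‖bhat - blo‖ ≤ |deriv (ℓ (y i)) ⟪x i, blo⟫| * ‖x i‖ / min (2 * lam * η) 1 := by
  obtain ⟨hη0, hη1⟩ := hη
  have hstrong := strongConvexOn_penalized_loss hconv hℓconv hr0conv hlam.le hη1.le y x
  have hfull : (fun β => ∑ j, ℓ (y j) ⟪x j, β⟫ + lam * ((1 - η) * r0 β + η * ‖β‖ ^ 2)) =
      (fun β => ∑ j ∈ Finset.univ.erase i, ℓ (y j) ⟪x j, β⟫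
        + lam * ((1 - η) * r0 β + η * ‖β‖ ^ 2)) + fun β => ℓ (y i) ⟪x i, β⟫ := by
    funext β
    rw [Pi.add_apply, ← Finset.sum_erase_add _ _ (Finset.mem_univ i)]
    ring
  have hclose := (hstrong _).mul_norm_sub_sq_le_of_isMinOn_add (hfull ▸ hstrong _) hbmem
    (hfull ▸ hbmin) hlomem hlomin
  have hloss_change : ℓ (y i) ⟪x i, blo⟫ - ℓ (y i) ⟪x i, bhat⟫ ≤
      |deriv (ℓ (y i)) ⟪x i, blo⟫| * ‖x i‖ * ‖bhat - blo‖ := by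
    refine ((hℓconv (y i)).sub_le_abs_deriv_mul_abs_sub
      ((hℓsmooth (y i)).differentiable two_ne_zero _) _).trans ?_
    rw [mul_assoc, ← inner_sub_right, norm_sub_rev bhat]
    gcongr
    exact abs_real_inner_le_norm _ _
  calc ‖bhat - blo‖ ≤ |deriv (ℓ (y i)) ⟪x i, blo⟫| * ‖x i‖ / (2 * lam * η) :=
        le_div_of_mul_sq_le_mul (by positivity) (norm_nonneg _) (by positivity)
          (hclose.trans hloss_change)
    _ ≤ |deriv (ℓ (y i)) ⟪x i, blo⟫| * ‖x i‖ / min (2 * lam * η) 1 :=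
        div_le_div_of_nonneg_left (by positivity) (lt_min (by positivity) one_pos)
          (min_le_left _ _)

/-- leave-one-out perturbation bound, Lemma 4 of the paper.
Under A1 (`Θ` closed convex), A4 (`r(β) = (1−η) r0(β) + η‖β‖²` with `η ∈ (0,1)`, `r0`
nonnegative convex Lipschitz), with `ℓ(y,·)` nonnegative, convex and twice continuously
differentiable, the full-data estimator `β̂` and leave-one-out estimator `β̂_{/i}` satisfy
`‖β̂ − β̂_{/i}‖₂ ≤ |ℓ̇_i(β̂_{/i})| ‖x_i‖₂ / min{2λη, 1}`,
where `ℓ̇_i(β) = ∂ℓ(y_i, z)/∂z` at `z = x_iᵀβ`. -/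
theorem leave_one_out_perturbation_bound {p n : ℕ}
    (Θ : Set (EuclideanSpace ℝ (Fin p)))
    (hne : Θ.Nonempty) (hcl : IsClosed Θ) (hconv : Convex ℝ Θ)
    (ℓ : ℝ → ℝ → ℝ)
    (hℓnn : ∀ y z, 0 ≤ ℓ y z)
    (hℓconv : ∀ y, ConvexOn ℝ Set.univ (ℓ y))
    (hℓsmooth : ∀ y, ContDiff ℝ 2 (ℓ y))
    (r0 : EuclideanSpace ℝ (Fin p) → ℝ)
    (hr0nn : ∀ β, 0 ≤ r0 β) (hr0conv : ConvexOn ℝ Set.univ r0)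
    (K : ℝ≥0) (hr0lip : LipschitzWith K r0)
    (lam η : ℝ) (hlam : 0 < lam) (hη : η ∈ Set.Ioo (0 : ℝ) 1)
    (y : Fin n → ℝ) (x : Fin n → EuclideanSpace ℝ (Fin p))
    (bhat : EuclideanSpace ℝ (Fin p)) (hbmem : bhat ∈ Θ)
    (hbmin : IsMinOn
      (fun β => ∑ j, ℓ (y j) ⟪x j, β⟫ + lam * ((1 - η) * r0 β + η * ‖β‖ ^ 2))
      Θ bhat)
    (i : Fin n) (blo : EuclideanSpace ℝ (Fin p)) (hlomem : blo ∈ Θ)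
    (hlomin : IsMinOn
      (fun β => ∑ j ∈ Finset.univ.erase i, ℓ (y j) ⟪x j, β⟫
        + lam * ((1 - η) * r0 β + η * ‖β‖ ^ 2))
      Θ blo) :
    ‖bhat - blo‖ ≤ |deriv (ℓ (y i)) ⟪x i, blo⟫| * ‖x i‖ / min (2 * lam * η) 1 :=
  leave_one_out_perturbation_bound_general Θ hconv ℓ hℓconv hℓsmooth r0 hr0conv lam η hlam hη y x
    bhat hbmem hbmin i blo hlomem hlomin
end

section
/- Under Assumptions A1 and A4, let β̂ minimize h(β) = Σ_{j=1}^n ℓ_j(β) + λ(1−η) r0(β) + λη βᵀβ over Θ and let β̂^α minimize h^α(β) = Σ_{j=1}^n ℓ_j(β) + λ(1−η) r0^α(β) + λη βᵀβ over Θ, where r0^α is a nonnegative convex twice continuously differentiable function. Then ‖β̂^α − β̂‖₂ ≤ sqrt( (2(1−η)/η) · sup_β |r0^α(β) − r0(β)| ), and the same bound holds for the leave-one-out versions: ‖β̂^α_{/i} − β̂_{/i}‖₂ ≤ sqrt( (2(1−η)/η) · sup_β |r0^α(β) − r0(β)| ). -/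
open scoped RealInnerProductSpace NNReal

/-- Strong-convexity growth bound at a constrained minimizer of `g + c‖·‖²`. -/
lemma strong_min_growth {F : Type*} [NormedAddCommGroup F] [InnerProductSpace ℝ F]
    (Θ : Set F) (hconv : Convex ℝ Θ) (g : F → ℝ) (hg : ConvexOn ℝ Set.univ g)
    (c : ℝ) (a : F) (ha : a ∈ Θ)
    (hmin : IsMinOn (fun β => g β + c * ‖β‖ ^ 2) Θ a)
    (b : F) (hb : b ∈ Θ) :
    g a + c * ‖a‖ ^ 2 + c / 2 * ‖b - a‖ ^ 2 ≤ g b + c * ‖b‖ ^ 2 := by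
  have hm : (1/2 : ℝ) • a + (1/2 : ℝ) • b ∈ Θ :=
    hconv ha hb (by norm_num) (by norm_num) (by norm_num)
  have h1 : g a + c * ‖a‖ ^ 2 ≤ g ((1/2 : ℝ) • a + (1/2 : ℝ) • b)
      + c * ‖(1/2 : ℝ) • a + (1/2 : ℝ) • b‖ ^ 2 := hmin hm
  have h2 : g ((1/2 : ℝ) • a + (1/2 : ℝ) • b) ≤ (1/2) * g a + (1/2) * g b :=
    hg.2 (Set.mem_univ a) (Set.mem_univ b) (by norm_num) (by norm_num) (by norm_num)
  have h3 : ‖(1/2 : ℝ) • a + (1/2 : ℝ) • b‖ ^ 2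
      = (1/2) * ‖a‖ ^ 2 + (1/2) * ‖b‖ ^ 2 - (1/4) * ‖b - a‖ ^ 2 := by
    have e1 : ‖a + b‖ ^ 2 = ‖a‖ ^ 2 + 2 * ⟪a, b⟫ + ‖b‖ ^ 2 := norm_add_sq_real a b
    have e2 : ‖b - a‖ ^ 2 = ‖b‖ ^ 2 - 2 * ⟪b, a⟫ + ‖a‖ ^ 2 := norm_sub_sq_real b a
    have e3 : ⟪a, b⟫ = ⟪b, a⟫ := real_inner_comm b a
    have e4 : (1/2 : ℝ) • a + (1/2 : ℝ) • b = (1/2 : ℝ) • (a + b) := by rw [smul_add]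
    rw [e4, norm_smul, Real.norm_eq_abs]
    have h5 : |(1/2 : ℝ)| = 1/2 := by norm_num
    rw [h5, mul_pow, e1, e2]
    linear_combination (1/2 : ℝ) * e3
  rw [h3] at h1
  linarith

/-- Perturbation bound between minimizers of two strongly convex objectives. -/
lemma perturb_sq_bound {F : Type*} [NormedAddCommGroup F] [InnerProductSpace ℝ F]
    (Θ : Set F) (hconv : Convex ℝ Θ) (g gα : F → ℝ)
    (hg : ConvexOn ℝ Set.univ g) (hgα : ConvexOn ℝ Set.univ gα)
    (c : ℝ) (a : F) (ha : a ∈ Θ)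
    (hmin : IsMinOn (fun β => g β + c * ‖β‖ ^ 2) Θ a)
    (b : F) (hb : b ∈ Θ)
    (hminα : IsMinOn (fun β => gα β + c * ‖β‖ ^ 2) Θ b)
    (M' : ℝ) (hM : ∀ β, |gα β - g β| ≤ M') :
    c * ‖b - a‖ ^ 2 ≤ 2 * M' := by
  have H1 := strong_min_growth Θ hconv g hg c a ha hmin b hb
  have H2 := strong_min_growth Θ hconv gα hgα c b hb hminα a ha
  have hrev : ‖a - b‖ = ‖b - a‖ := norm_sub_rev a b
  rw [hrev] at H2
  have ha' := abs_le.mp (hM a)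
  have hb' := abs_le.mp (hM b)
  linarith

/-- smoothing perturbation bound, Lemma 8 of the paper.
Under A1 (`Θ` closed convex) and A4 (`r0` nonnegative convex Lipschitz, `η ∈ (0,1)`),
let `β̂` minimize `h(β) = Σ_j ℓ_j(β) + λ(1−η) r0(β) + λη‖β‖²` over `Θ` and `β̂^α` minimize
`h^α(β) = Σ_j ℓ_j(β) + λ(1−η) r0^α(β) + λη‖β‖²` over `Θ`, where `r0^α` is nonnegative,
convex and twice continuously differentiable.  Then
`‖β̂^α − β̂‖₂ ≤ √((2(1−η)/η) ‖r0^α − r0‖_∞)`, and the same bound holds for the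
leave-one-out versions.  (The sup-norm bound is expressed as: for every uniform bound `M`
on `|r0^α − r0|`, the distance is at most `√((2(1−η)/η) M)`.) -/
theorem smoothing_perturbation_bound {p n : ℕ}
    (Θ : Set (EuclideanSpace ℝ (Fin p)))
    (hne : Θ.Nonempty) (hcl : IsClosed Θ) (hconv : Convex ℝ Θ)
    (ℓ : ℝ → ℝ → ℝ)
    (hℓnn : ∀ y z, 0 ≤ ℓ y z)
    (hℓconv : ∀ y, ConvexOn ℝ Set.univ (ℓ y))
    (hℓdiff : ∀ y, ContDiff ℝ 1 (ℓ y))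
    (r0 r0α : EuclideanSpace ℝ (Fin p) → ℝ)
    (hr0nn : ∀ β, 0 ≤ r0 β) (hr0conv : ConvexOn ℝ Set.univ r0)
    (K : ℝ≥0) (hr0lip : LipschitzWith K r0)
    (hr0αnn : ∀ β, 0 ≤ r0α β) (hr0αconv : ConvexOn ℝ Set.univ r0α)
    (hr0αsmooth : ContDiff ℝ 2 r0α)
    (lam η : ℝ) (hlam : 0 < lam) (hη : η ∈ Set.Ioo (0 : ℝ) 1)
    (y : Fin n → ℝ) (x : Fin n → EuclideanSpace ℝ (Fin p))
    (bhat : EuclideanSpace ℝ (Fin p)) (hbmem : bhat ∈ Θ)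
    (hbmin : IsMinOn
      (fun β => ∑ j, ℓ (y j) ⟪x j, β⟫ + lam * (1 - η) * r0 β + lam * η * ‖β‖ ^ 2)
      Θ bhat)
    (bhatα : EuclideanSpace ℝ (Fin p)) (hbαmem : bhatα ∈ Θ)
    (hbαmin : IsMinOn
      (fun β => ∑ j, ℓ (y j) ⟪x j, β⟫ + lam * (1 - η) * r0α β + lam * η * ‖β‖ ^ 2)
      Θ bhatα)
    (i : Fin n)
    (blo : EuclideanSpace ℝ (Fin p)) (hlomem : blo ∈ Θ)
    (hlomin : IsMinOn
      (fun β => ∑ j ∈ Finset.univ.erase i, ℓ (y j) ⟪x j, β⟫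
        + lam * (1 - η) * r0 β + lam * η * ‖β‖ ^ 2)
      Θ blo)
    (bloα : EuclideanSpace ℝ (Fin p)) (hloαmem : bloα ∈ Θ)
    (hloαmin : IsMinOn
      (fun β => ∑ j ∈ Finset.univ.erase i, ℓ (y j) ⟪x j, β⟫
        + lam * (1 - η) * r0α β + lam * η * ‖β‖ ^ 2)
      Θ bloα)
    (M : ℝ) (hM : ∀ β, |r0α β - r0 β| ≤ M) :
    ‖bhatα - bhat‖ ≤ Real.sqrt (2 * (1 - η) / η * M) ∧
      ‖bloα - blo‖ ≤ Real.sqrt (2 * (1 - η) / η * M) := by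
  obtain ⟨hη0, hη1⟩ := hη
  -- convexity of the data-fit part, for any index set
  have hloss : ∀ s : Finset (Fin n),
      ConvexOn ℝ Set.univ (fun β : EuclideanSpace ℝ (Fin p) => ∑ j ∈ s, ℓ (y j) ⟪x j, β⟫) := by
    intro s
    refine ⟨convex_univ, ?_⟩
    intro b1 _ b2 _ t u ht hu htu
    simp only
    have key : ∀ j : Fin n, ℓ (y j) ⟪x j, t • b1 + u • b2⟫
        ≤ t * ℓ (y j) ⟪x j, b1⟫ + u * ℓ (y j) ⟪x j, b2⟫ := by
      intro j
      have hin : ⟪x j, t • b1 + u • b2⟫ = t * ⟪x j, b1⟫ + u * ⟪x j, b2⟫ := by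
        rw [inner_add_right, real_inner_smul_right, real_inner_smul_right]
      rw [hin]
      have := (hℓconv (y j)).2 (Set.mem_univ ⟪x j, b1⟫) (Set.mem_univ ⟪x j, b2⟫) ht hu htu
      simpa [smul_eq_mul] using this
    calc ∑ j ∈ s, ℓ (y j) ⟪x j, t • b1 + u • b2⟫
        ≤ ∑ j ∈ s, (t * ℓ (y j) ⟪x j, b1⟫ + u * ℓ (y j) ⟪x j, b2⟫) :=
          Finset.sum_le_sum fun j _ => key j
      _ = t • ∑ j ∈ s, ℓ (y j) ⟪x j, b1⟫ + u • ∑ j ∈ s, ℓ (y j) ⟪x j, b2⟫ := by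
          rw [Finset.sum_add_distrib, ← Finset.mul_sum, ← Finset.mul_sum]
          simp [smul_eq_mul]
  have hcoef : (0 : ℝ) ≤ lam * (1 - η) := by
    have : (0:ℝ) ≤ 1 - η := by linarith
    positivity
  -- convexity of the regularized objectives (without the quadratic part)
  have hgconv : ∀ (s : Finset (Fin n)) (r : EuclideanSpace ℝ (Fin p) → ℝ),
      ConvexOn ℝ Set.univ r →
      ConvexOn ℝ Set.univ
        (fun β : EuclideanSpace ℝ (Fin p) =>
          ∑ j ∈ s, ℓ (y j) ⟪x j, β⟫ + lam * (1 - η) * r β) := by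
    intro s r hr
    have h2 : ConvexOn ℝ Set.univ (fun β => lam * (1 - η) * r β) := by
      simpa [smul_eq_mul] using hr.smul hcoef
    exact (hloss s).add h2
  have hMnn : 0 ≤ M := le_trans (abs_nonneg _) (hM bhat)
  have hc : (0 : ℝ) < lam * η := mul_pos hlam hη0
  -- generic consequence
  have main : ∀ (s : Finset (Fin n)) (a b : EuclideanSpace ℝ (Fin p)),
      a ∈ Θ → b ∈ Θ →
      IsMinOn (fun β => ∑ j ∈ s, ℓ (y j) ⟪x j, β⟫
        + lam * (1 - η) * r0 β + lam * η * ‖β‖ ^ 2) Θ a →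
      IsMinOn (fun β => ∑ j ∈ s, ℓ (y j) ⟪x j, β⟫
        + lam * (1 - η) * r0α β + lam * η * ‖β‖ ^ 2) Θ b →
      ‖b - a‖ ≤ Real.sqrt (2 * (1 - η) / η * M) := by
    intro s a b ha hb hmina hminb
    have hsq := perturb_sq_bound Θ hconv
      (fun β => ∑ j ∈ s, ℓ (y j) ⟪x j, β⟫ + lam * (1 - η) * r0 β)
      (fun β => ∑ j ∈ s, ℓ (y j) ⟪x j, β⟫ + lam * (1 - η) * r0α β)
      (hgconv s r0 hr0conv) (hgconv s r0α hr0αconv)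
      (lam * η) a ha hmina b hb hminb (lam * (1 - η) * M)
      (by
        intro β
        have : |lam * (1 - η)| * |r0α β - r0 β| ≤ lam * (1 - η) * M := by
          rw [abs_of_nonneg hcoef]
          exact mul_le_mul_of_nonneg_left (hM β) hcoef
        calc |(∑ j ∈ s, ℓ (y j) ⟪x j, β⟫ + lam * (1 - η) * r0α β)
              - (∑ j ∈ s, ℓ (y j) ⟪x j, β⟫ + lam * (1 - η) * r0 β)|
            = |lam * (1 - η)| * |r0α β - r0 β| := by
              rw [← abs_mul]; ring_nf
          _ ≤ lam * (1 - η) * M := this)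
    have hsq2 : ‖b - a‖ ^ 2 ≤ 2 * (1 - η) / η * M := by
      rw [div_mul_eq_mul_div, le_div_iff₀ hη0]
      nlinarith [hsq, hlam]
    have := Real.sqrt_le_sqrt hsq2
    rwa [Real.sqrt_sq (norm_nonneg _)] at this
  exact ⟨main Finset.univ bhat bhatα hbmem hbαmem hbmin hbαmin,
    main (Finset.univ.erase i) blo bloα hlomem hloαmem hlomin hloαmin⟩
end

section
/- Suppose x ~ N(0, Σ) in ℝ^p with σ_max(Σ) ≤ C_X/p, suppose ‖β*‖₂ ≤ ξ √p, and suppose that conditionally on x, y follows a Poisson distribution with mean μ = log(1 + e^{xᵀβ*}). Then there exists a numerical constant C* > 0 such that for every m ≥ 1, E[y^m] ≤ (C* m)^m e^{m² C_X ξ² / 2}. -/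
/-!
Since `k ^ m ≤ (m / log 2) ^ m * 2 ^ k` and a Poisson variable with mean `r` has
`E[2 ^ k] = e ^ r`, the conditional `m`-th moment of `y` is at most
`(m / log 2) ^ m * e ^ softplus(xᵀβ*) = (m / log 2) ^ m * (1 + e ^ (xᵀβ*))`.
As `xᵀβ*` is centred Gaussian with variance `s = β*ᵀΣβ* ≤ C_X ξ²`, its moment generating
function bounds the expectation of this by `(m / log 2) ^ m * (1 + e ^ (s / 2))`, and
`2 (m / log 2) ^ m ≤ (3 m) ^ m`.
-/

open MeasureTheory ProbabilityTheory
open scoped RealInnerProductSpace ENNReal NNReal Nat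

lemma pow_le_div_pow_mul_exp {x θ : ℝ} (hx : 0 ≤ x) (hθ : 0 < θ) (m : ℕ) :
    x ^ m ≤ (m / θ) ^ m * Real.exp (θ * x) := by
  have hfact : (θ * x) ^ m ≤ m ! * Real.exp (θ * x) := by
    rw [← div_le_iff₀' (by positivity)]
    exact Real.pow_div_factorial_le_exp (x := θ * x) (by positivity) m
  have hfact_le : (m ! : ℝ) ≤ (m : ℝ) ^ m := by exact_mod_cast Nat.factorial_le_pow m
  rw [div_pow, div_mul_eq_mul_div, le_div_iff₀ (by positivity), mul_comm, ← mul_pow]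
  exact hfact.trans (by gcongr)

lemma two_mul_div_log_two_pow_le {m : ℕ} (hm : 1 ≤ m) :
    2 * (m / Real.log 2) ^ m ≤ (3 * m) ^ m := by
  have hlog : 2 / 3 < Real.log 2 := by linarith [Real.log_two_gt_d9]
  calc 2 * (m / Real.log 2) ^ m ≤ 2 ^ m * (m / Real.log 2) ^ m := by
        gcongr; exact le_self_pow₀ one_le_two (by omega)
    _ = (2 / Real.log 2 * m) ^ m := by rw [← mul_pow]; ring
    _ ≤ (3 * m) ^ m := by
        gcongr
        rw [div_le_iff₀ (by positivity)]; linarith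

lemma exp_toNNReal_log_one_add_exp (t : ℝ) :
    Real.exp (Real.log (1 + Real.exp t)).toNNReal = 1 + Real.exp t := by
  have hpos : 0 < 1 + Real.exp t := by positivity
  rw [Real.coe_toNNReal _ (Real.log_nonneg (by linarith [Real.exp_pos t])), Real.exp_log hpos]

lemma lintegral_exp_mul_poissonMeasure (r : ℝ≥0) (t : ℝ) :
    ∫⁻ k, ENNReal.ofReal (Real.exp (t * k)) ∂poissonMeasure r =
      ENNReal.ofReal (Real.exp (r * (Real.exp t - 1))) := by
  have hterm (k : ℕ) : Real.exp (-r) * r ^ k / k ! * Real.exp (t * k) =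
      Real.exp (-r) * ((r * Real.exp t) ^ k / k !) := by
    rw [mul_comm t, Real.exp_nat_mul, mul_pow]; ring
  have hsum : HasSum (fun k : ℕ ↦ Real.exp (-r) * r ^ k / k ! * Real.exp (t * k))
      (Real.exp (r * (Real.exp t - 1))) := by
    have h := (NormedSpace.expSeries_div_hasSum_exp ((r : ℝ) * Real.exp t)).mul_left
      (Real.exp (-r))
    rw [← Real.exp_eq_exp_ℝ, ← Real.exp_add, show -(r : ℝ) + r * Real.exp t =
      r * (Real.exp t - 1) by ring] at h
    simpa only [hterm] using h
  have hmul (k : ℕ) : ENNReal.ofReal (Real.exp (-r) * r ^ k / k !) *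
      ENNReal.ofReal (Real.exp (t * k)) =
      ENNReal.ofReal (Real.exp (-r) * r ^ k / k ! * Real.exp (t * k)) :=
    (ENNReal.ofReal_mul (by positivity)).symm
  simp only [poissonMeasure, lintegral_sum_measure, lintegral_smul_measure, lintegral_dirac,
    smul_eq_mul, hmul]
  rw [← ENNReal.ofReal_tsum_of_nonneg (fun _ ↦ by positivity) hsum.summable, hsum.tsum_eq]

lemma lintegral_pow_poissonMeasure_le (r : ℝ≥0) (m : ℕ) {θ : ℝ} (hθ : 0 < θ) :
    ∫⁻ k, (k : ℝ≥0∞) ^ m ∂poissonMeasure r ≤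
      ENNReal.ofReal ((m / θ) ^ m * Real.exp (r * (Real.exp θ - 1))) := by
  calc ∫⁻ k, (k : ℝ≥0∞) ^ m ∂poissonMeasure r
      ≤ ∫⁻ k, ENNReal.ofReal ((m / θ) ^ m) * ENNReal.ofReal (Real.exp (θ * k))
          ∂poissonMeasure r := by
        refine lintegral_mono fun k ↦ ?_
        rw [← ENNReal.ofReal_natCast, ← ENNReal.ofReal_pow k.cast_nonneg,
          ← ENNReal.ofReal_mul (by positivity)]
        exact ENNReal.ofReal_le_ofReal (pow_le_div_pow_mul_exp k.cast_nonneg hθ m)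
    _ = _ := by
        rw [lintegral_const_mul _ .of_discrete, lintegral_exp_mul_poissonMeasure,
          ← ENNReal.ofReal_mul (by positivity)]

lemma lintegral_exp_mul_gaussianReal (μ : ℝ) (v : ℝ≥0) (t : ℝ) :
    ∫⁻ x, ENNReal.ofReal (Real.exp (t * x)) ∂gaussianReal μ v =
      ENNReal.ofReal (Real.exp (μ * t + v * t ^ 2 / 2)) := by
  rw [← ofReal_integral_eq_lintegral_ofReal (integrable_exp_mul_gaussianReal t)
    (.of_forall fun _ ↦ (Real.exp_pos _).le),
    ← mgf_gaussianReal (X := id) (p := gaussianReal μ v) (by simp) t]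
  rfl

lemma lintegral_exp_mul_of_map_eq_gaussianReal {Ω : Type*} [MeasurableSpace Ω] {ν : Measure Ω}
    {X : Ω → ℝ} {μ : ℝ} {v : ℝ≥0} (hX : Measurable X) (hmap : ν.map X = gaussianReal μ v)
    (t : ℝ) :
    ∫⁻ ω, ENNReal.ofReal (Real.exp (t * X ω)) ∂ν =
      ENNReal.ofReal (Real.exp (μ * t + v * t ^ 2 / 2)) := by
  rw [← lintegral_exp_mul_gaussianReal, ← hmap, lintegral_map (by fun_prop) hX]

lemma lintegral_exp_softplus_of_map_eq_gaussianReal {Ω : Type*} [MeasurableSpace Ω]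
    {ν : Measure Ω} [IsProbabilityMeasure ν] {X : Ω → ℝ} {v : ℝ≥0} (hX : Measurable X)
    (hmap : ν.map X = gaussianReal 0 v) :
    ∫⁻ ω, ENNReal.ofReal (Real.exp (Real.log (1 + Real.exp (X ω))).toNNReal) ∂ν =
      1 + ENNReal.ofReal (Real.exp (v / 2)) := by
  have h := lintegral_exp_mul_of_map_eq_gaussianReal hX hmap 1
  simp only [one_mul, zero_add, one_pow, mul_one] at h
  simp_rw [exp_toNNReal_log_one_add_exp,
    ENNReal.ofReal_add zero_le_one (Real.exp_nonneg _), ENNReal.ofReal_one]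
  rw [lintegral_add_left measurable_const, lintegral_const, measure_univ, one_mul, h]

lemma le_mul_sq_of_le_div_mul_sq {q C ξ r : ℝ} {p : ℕ} (hp : 0 < p) (hC : 0 ≤ C)
    (hq : q ≤ C / p * r ^ 2) (hr : 0 ≤ r) (hrξ : r ≤ ξ * √p) : q ≤ C * ξ ^ 2 := by
  have hp' : (0 : ℝ) < p := by exact_mod_cast hp
  calc q ≤ C / p * (ξ * √p) ^ 2 := hq.trans (by gcongr)
    _ = C * ξ ^ 2 := by rw [mul_pow, Real.sq_sqrt hp'.le]; field_simp

/-- Suppose `x ~ N(0, Σ)` in `ℝ^p` with `σ_max(Σ) ≤ C_X/p`, suppose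
`‖β*‖₂ ≤ ξ√p`, and suppose that conditionally on `x`, `y` is Poisson with mean
`μ = log(1 + e^{xᵀβ*})`.  Then there exists a numerical constant `C* > 0` such that for
every `m ≥ 1`, `E[y^m] ≤ (C* m)^m e^{m² C_X ξ²/2}`.
The law of `x` is a probability measure `ν` whose one-dimensional projections are Gaussian,
and `E[y^m]` is written as the iterated (Lebesgue) integral
`∫ ∫ n^m dPoisson(log(1+e^{xᵀβ*}))(n) dν(x)`. -/
theorem poisson_softplus_moment_bound :
    ∃ Cstar : ℝ, 0 < Cstar ∧
      ∀ (p : ℕ), 0 < p →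
      ∀ (C_X ξ : ℝ), 0 < C_X → 0 < ξ →
      ∀ (Sig : Matrix (Fin p) (Fin p) ℝ), Sig.PosSemidef →
      (∀ u : EuclideanSpace ℝ (Fin p),
        ⟪u, Matrix.toEuclideanLin Sig u⟫ ≤ C_X / p * ‖u‖ ^ 2) →
      ∀ (βstar : EuclideanSpace ℝ (Fin p)), ‖βstar‖ ≤ ξ * Real.sqrt p →
      ∀ (ν : Measure (EuclideanSpace ℝ (Fin p))), IsProbabilityMeasure ν →
      (∀ u : EuclideanSpace ℝ (Fin p),
        Measure.map (fun v => ⟪u, v⟫) ν =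
          gaussianReal 0 (Real.toNNReal ⟪u, Matrix.toEuclideanLin Sig u⟫)) →
      ∀ m : ℕ, 1 ≤ m →
        ∫⁻ v, ∫⁻ k : ℕ, (k : ℝ≥0∞) ^ m
            ∂(poissonMeasure (Real.toNNReal (Real.log (1 + Real.exp ⟪v, βstar⟫)))) ∂ν ≤
          ENNReal.ofReal ((Cstar * m) ^ m * Real.exp ((m : ℝ) ^ 2 * C_X * ξ ^ 2 / 2)) := by
  refine ⟨3, by norm_num, fun p hp C_X ξ hC_X _ Sig _ hSig βstar hβ ν _ hmap m hm ↦ ?_⟩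
  set s := Real.toNNReal ⟪βstar, Matrix.toEuclideanLin Sig βstar⟫
  have hs : (s : ℝ) ≤ C_X * ξ ^ 2 :=
    max_le (le_mul_sq_of_le_div_mul_sq hp hC_X.le (hSig βstar) (norm_nonneg _) hβ)
      (by positivity)
  have hmap' : ν.map (fun v ↦ ⟪v, βstar⟫) = gaussianReal 0 s := by
    rw [← hmap βstar]; simp_rw [real_inner_comm βstar]
  have hexp : Real.exp (s / 2) ≤ Real.exp ((m : ℝ) ^ 2 * C_X * ξ ^ 2 / 2) := by
    have : (1 : ℝ) ≤ (m : ℝ) ^ 2 := one_le_pow₀ (by exact_mod_cast hm)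
    gcongr; nlinarith [s.coe_nonneg]
  calc _ ≤ ∫⁻ v, ENNReal.ofReal ((m / Real.log 2) ^ m) *
          ENNReal.ofReal (Real.exp (Real.log (1 + Real.exp ⟪v, βstar⟫)).toNNReal) ∂ν := by
        refine lintegral_mono fun v ↦ ?_
        have h := lintegral_pow_poissonMeasure_le
          (Real.log (1 + Real.exp ⟪v, βstar⟫)).toNNReal m (Real.log_pos one_lt_two)
        rwa [Real.exp_log two_pos, show (2 : ℝ) - 1 = 1 by norm_num, mul_one,
          ENNReal.ofReal_mul (by positivity)] at h
    _ = ENNReal.ofReal ((m / Real.log 2) ^ m) * (1 + ENNReal.ofReal (Real.exp (s / 2))) := by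
        rw [lintegral_const_mul' _ _ ENNReal.ofReal_ne_top,
          lintegral_exp_softplus_of_map_eq_gaussianReal (by fun_prop) hmap']
    _ ≤ _ := by
        rw [← ENNReal.ofReal_one, ← ENNReal.ofReal_add zero_le_one (Real.exp_nonneg _),
          ← ENNReal.ofReal_mul (by positivity)]
        refine ENNReal.ofReal_le_ofReal ?_
        have h1 : 1 ≤ Real.exp (s / 2) := Real.one_le_exp (by positivity)
        have h2 : 0 ≤ (m / Real.log 2) ^ m := by positivity
        calc (m / Real.log 2) ^ m * (1 + Real.exp (s / 2))
            ≤ 2 * (m / Real.log 2) ^ m * Real.exp (s / 2) := by nlinarith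
          _ ≤ (3 * m) ^ m * Real.exp ((m : ℝ) ^ 2 * C_X * ξ ^ 2 / 2) :=
            mul_le_mul (two_mul_div_log_two_pow_le hm) hexp (by positivity) (by positivity)
end
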